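/- Cocycle property of curvature-difference traces: for projections P⁰, P¹, P² pairwise differing by trace class, with invertible Toeplitz operators T₁ = (P⁰,P¹), T₂ = (P¹,P²), T = (P⁰,P²), and bounded R^i ∈ End(W^i) such that all relevant differences are trace class, tr_{W⁰}[T⁻¹ R² T − R⁰] = tr_{W⁰}[(T₂T₁)⁻¹ R² (T₂T₁) − R⁰], provided T − T₂T₁ is trace class and the difference of conjugations (T₂T₁)⁻¹R²(T₂T₁) − T⁻¹R²T is the trace of a commutator and hence traceless. -/

import Mathlib

open scoped ComplexConjugate

namespace Pap

noncomputable section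

variable {E F : Type*}
  [NormedAddCommGroup E] [InnerProductSpace ℂ E]
  [NormedAddCommGroup F] [InnerProductSpace ℂ F]

/-- Nuclear (= trace-class on Hilbert space) operator: it admits a decomposition
`A x = ∑ cₙ ⟪vₙ, x⟫ uₙ` with `∑ |cₙ| < ∞` and unit-norm vectors `uₙ, vₙ`. -/
def IsTraceClass (A : E →L[ℂ] F) : Prop :=
  ∃ (c : ℕ → ℂ) (u : ℕ → F) (v : ℕ → E),
    Summable (fun n => ‖c n‖) ∧ (∀ n, ‖u n‖ ≤ 1) ∧ (∀ n, ‖v n‖ ≤ 1) ∧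
    ∀ x, A x = ∑' n, c n • ((inner ℂ (v n) x : ℂ) • u n)

/-- Trace norm: the infimum of `∑ |cₙ|` over all such decompositions. -/
def traceNorm (A : E →L[ℂ] F) : ℝ :=
  sInf { t : ℝ | ∃ (c : ℕ → ℂ) (u : ℕ → F) (v : ℕ → E),
    Summable (fun n => ‖c n‖) ∧ (∀ n, ‖u n‖ ≤ 1) ∧ (∀ n, ‖v n‖ ≤ 1) ∧
    (∀ x, A x = ∑' n, c n • ((inner ℂ (v n) x : ℂ) • u n)) ∧ t = ∑' n, ‖c n‖ }

open Classical in
/-- The trace, computed from a chosen nuclear decomposition. -/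
def trace (A : E →L[ℂ] E) : ℂ :=
  if h : IsTraceClass A then
    ∑' n, h.choose n *
      (inner ℂ (h.choose_spec.choose_spec.choose n) (h.choose_spec.choose n) : ℂ)
  else 0

end

end Pap

namespace Pap

/-- The generalized Toeplitz operator `(P,Q) = Q∘P : range P → range Q`. -/
noncomputable def toeplitz {H : Type*} [NormedAddCommGroup H] [InnerProductSpace ℂ H]
    (P Q : H →L[ℂ] H) : (LinearMap.range (P : H →ₗ[ℂ] H)) →L[ℂ] (LinearMap.range (Q : H →ₗ[ℂ] H)) :=
  (Q.comp (Submodule.subtypeL (LinearMap.range (P : H →ₗ[ℂ] H)))).codRestrict (LinearMap.range (Q : H →ₗ[ℂ] H))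
    (fun _ => LinearMap.mem_range_self (Q : H →ₗ[ℂ] H) _)

end Pap

/-!
Write `T̃ = T₂T₁` and `S = T₁'T₂'`, so that `T T' = T̃ S = 1`. Then
`T'R²T − S R²T̃ = (T'R²)(T − T̃) + (T' − S)(R²T̃)`, and cyclicity of the trace moves the
trace-class factors `T − T̃` and `T' − S` to the front. The two permuted terms add up to the
commutator `[(T − T̃)T', R²]`, which has trace zero; hence the two sides differ by the trace of a
trace-class operator of trace zero.

The trace is read off an arbitrary nuclear decomposition `A = ∑ cₙ ⟪vₙ, ·⟫ uₙ` as `∑ cₙ ⟪vₙ, uₙ⟫`.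
By Fubini and Parseval this equals `∑ᵢ ⟪bᵢ, A bᵢ⟫` for a Hilbert basis `(bᵢ)`, so it does not
depend on the decomposition, and additivity and cyclicity can be checked on decompositions.
-/

namespace Pap

open ContinuousLinearMap
open scoped InnerProductSpace

def interleave {α : Type*} (f g : ℕ → α) : ℕ → α :=
  Sum.elim f g ∘ Equiv.natSumNatEquivNat.symm

section Interleave

variable {α : Type*} (f g : ℕ → α)

@[simp]
theorem interleave_two_mul (k : ℕ) : interleave f g (2 * k) = f k := by
  simp [interleave]

@[simp]
theorem interleave_two_mul_add_one (k : ℕ) : interleave f g (2 * k + 1) = g k := by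
  simp [interleave]

theorem forall_interleave {p : α → Prop} (hf : ∀ k, p (f k)) (hg : ∀ k, p (g k)) (n : ℕ) :
    p (interleave f g n) := by
  simp only [interleave, Function.comp_apply]
  cases Equiv.natSumNatEquivNat.symm n <;> simp [hf, hg]

end Interleave

variable {E F G : Type*}
  [NormedAddCommGroup E] [InnerProductSpace ℂ E]
  [NormedAddCommGroup F] [InnerProductSpace ℂ F]
  [NormedAddCommGroup G] [InnerProductSpace ℂ G]

/-- The radius `K` is free so that composing with bounded operators stays within the notion;
`rescale` brings any radius back to the `K = 1` of `IsTraceClass`. -/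
structure IsNuclearDecomposition (A : E →L[ℂ] F) (K : ℝ) (c : ℕ → ℂ) (u : ℕ → F) (v : ℕ → E) :
    Prop where
  summable : Summable fun n => ‖c n‖
  norm_u_le : ∀ n, ‖u n‖ ≤ K
  norm_v_le : ∀ n, ‖v n‖ ≤ K
  apply_eq : ∀ x, A x = ∑' n, c n • (⟪v n, x⟫_ℂ • u n)

theorem isTraceClass_iff_exists_isNuclearDecomposition {A : E →L[ℂ] F} :
    IsTraceClass A ↔ ∃ c u v, IsNuclearDecomposition A 1 c u v :=
  ⟨fun ⟨c, u, v, hc, hu, hv, hA⟩ => ⟨c, u, v, ⟨hc, hu, hv, hA⟩⟩,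
    fun ⟨c, u, v, ⟨hc, hu, hv, hA⟩⟩ => ⟨c, u, v, hc, hu, hv, hA⟩⟩

namespace IsNuclearDecomposition

section

variable {A B : E →L[ℂ] F} {K : ℝ} {c d : ℕ → ℂ} {u w : ℕ → F} {v z : ℕ → E}

theorem nonneg (h : IsNuclearDecomposition A K c u v) : 0 ≤ K :=
  (norm_nonneg _).trans (h.norm_u_le 0)

theorem mono (h : IsNuclearDecomposition A K c u v) {K' : ℝ} (hK : K ≤ K') :
    IsNuclearDecomposition A K' c u v :=
  ⟨h.summable, fun n => (h.norm_u_le n).trans hK, fun n => (h.norm_v_le n).trans hK, h.apply_eq⟩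

theorem norm_term_le (h : IsNuclearDecomposition A K c u v) (x : E) (n : ℕ) :
    ‖c n • (⟪v n, x⟫_ℂ • u n)‖ ≤ ‖c n‖ * (K * ‖x‖ * K) := by
  rw [norm_smul, norm_smul]
  have hinner : ‖⟪v n, x⟫_ℂ‖ ≤ K * ‖x‖ :=
    (norm_inner_le_norm _ _).trans (by gcongr; exact h.norm_v_le n)
  exact mul_le_mul_of_nonneg_left (mul_le_mul hinner (h.norm_u_le n) (norm_nonneg _)
    (mul_nonneg h.nonneg (norm_nonneg _))) (norm_nonneg _)

theorem hasSum_apply [CompleteSpace F] (h : IsNuclearDecomposition A K c u v) (x : E) :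
    HasSum (fun n => c n • (⟪v n, x⟫_ℂ • u n)) (A x) := by
  rw [h.apply_eq x]
  exact (Summable.of_norm_bounded (h.summable.mul_right _) (h.norm_term_le x)).hasSum

theorem rescale (h : IsNuclearDecomposition A K c u v) (hK : 0 < K) :
    IsNuclearDecomposition A 1 (fun n => (K : ℂ) ^ 2 * c n) (fun n => (K : ℂ)⁻¹ • u n)
      (fun n => (K : ℂ)⁻¹ • v n) where
  summable := by
    simpa [norm_mul, abs_of_pos hK] using h.summable.mul_left (K ^ 2)
  norm_u_le n := by
    rw [norm_smul, norm_inv, Complex.norm_real, Real.norm_of_nonneg hK.le]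
    exact inv_mul_le_one_of_le₀ (h.norm_u_le n) hK.le
  norm_v_le n := by
    rw [norm_smul, norm_inv, Complex.norm_real, Real.norm_of_nonneg hK.le]
    exact inv_mul_le_one_of_le₀ (h.norm_v_le n) hK.le
  apply_eq x := by
    rw [h.apply_eq x]
    refine tsum_congr fun n => ?_
    have hK' : (K : ℂ) ≠ 0 := Complex.ofReal_ne_zero.2 hK.ne'
    simp only [inner_smul_left, map_inv₀, Complex.conj_ofReal, smul_smul]
    congr 1
    field_simp

theorem isTraceClass (h : IsNuclearDecomposition A K c u v) : IsTraceClass A :=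
  isTraceClass_iff_exists_isNuclearDecomposition.2
    ⟨_, _, _, (h.mono (le_max_left K 1)).rescale (one_pos.trans_le (le_max_right K 1))⟩

theorem add [CompleteSpace F] (hA : IsNuclearDecomposition A K c u v)
    (hB : IsNuclearDecomposition B K d w z) :
    IsNuclearDecomposition (A + B) K (interleave c d) (interleave u w) (interleave v z) where
  summable := .even_add_odd (by simpa using hA.summable) (by simpa using hB.summable)
  norm_u_le := forall_interleave (p := (‖·‖ ≤ K)) u w hA.norm_u_le hB.norm_u_le
  norm_v_le := forall_interleave (p := (‖·‖ ≤ K)) v z hA.norm_v_le hB.norm_v_le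
  apply_eq x :=
    (HasSum.even_add_odd (by simpa using hA.hasSum_apply x)
      (by simpa using hB.hasSum_apply x)).tsum_eq.symm

theorem neg (h : IsNuclearDecomposition A K c u v) :
    IsNuclearDecomposition (-A) K (-c) u v where
  summable := by simpa using h.summable
  norm_u_le := h.norm_u_le
  norm_v_le := h.norm_v_le
  apply_eq x := by
    rw [neg_apply, h.apply_eq x, ← tsum_neg]
    simp only [Pi.neg_apply, neg_smul]

theorem clm_comp [CompleteSpace F] (h : IsNuclearDecomposition A K c u v) (Y : F →L[ℂ] G) :
    IsNuclearDecomposition (Y ∘L A) ((‖Y‖ + 1) * K) c (fun n => Y (u n)) v where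
  summable := h.summable
  norm_u_le n := (Y.le_opNorm _).trans <| by
    nlinarith [h.norm_u_le n, h.nonneg, norm_nonneg Y, norm_nonneg (u n)]
  norm_v_le n := (h.norm_v_le n).trans <| by nlinarith [h.nonneg, norm_nonneg Y]
  apply_eq x := by
    rw [comp_apply, ← ((h.hasSum_apply x).mapL Y).tsum_eq]
    simp only [map_smul]

theorem comp_clm [CompleteSpace E] [CompleteSpace G] (h : IsNuclearDecomposition A K c u v)
    (Y : G →L[ℂ] E) :
    IsNuclearDecomposition (A ∘L Y) ((‖Y‖ + 1) * K) c u (fun n => adjoint Y (v n)) where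
  summable := h.summable
  norm_u_le n := (h.norm_u_le n).trans <| by nlinarith [h.nonneg, norm_nonneg Y]
  norm_v_le n := ((adjoint Y).le_opNorm _).trans <| by
    rw [adjoint.norm_map]
    nlinarith [h.norm_v_le n, h.nonneg, norm_nonneg Y, norm_nonneg (v n)]
  apply_eq x := by
    simp only [comp_apply, h.apply_eq, adjoint_inner_left]

end

section

variable {A : E →L[ℂ] E} {K : ℝ} {c : ℕ → ℂ} {u v : ℕ → E}

theorem summable_coeff_mul_inner (h : IsNuclearDecomposition A K c u v) :
    Summable fun n => c n * ⟪v n, u n⟫_ℂ := by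
  refine Summable.of_norm_bounded (h.summable.mul_right (K * K)) fun n => ?_
  rw [norm_mul]
  gcongr
  exact (norm_inner_le_norm _ _).trans (mul_le_mul (h.norm_v_le n) (h.norm_u_le n)
    (norm_nonneg _) h.nonneg)

theorem summable_coeff_mul_inner_mul_inner [CompleteSpace E] {ι : Type*} (b : HilbertBasis ι ℂ E)
    (h : IsNuclearDecomposition A K c u v) :
    Summable fun p : ℕ × ι => c p.1 * (⟪v p.1, b p.2⟫_ℂ * ⟪b p.2, u p.1⟫_ℂ) := by
  set g : ℕ × ι → ℝ := fun p => ‖c p.1‖ * (‖⟪b p.2, v p.1⟫_ℂ‖ ^ 2 + ‖⟪b p.2, u p.1⟫_ℂ‖ ^ 2)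
  have hrow : ∀ n, HasSum (fun i => g (n, i))
      (‖c n‖ * (∑' i, ‖⟪b i, v n⟫_ℂ‖ ^ 2 + ∑' i, ‖⟪b i, u n⟫_ℂ‖ ^ 2)) := fun n =>
    ((b.orthonormal.inner_products_summable (x := v n)).hasSum.add
      (b.orthonormal.inner_products_summable (x := u n)).hasSum).mul_left _
  have bessel : ∀ x : E, ‖x‖ ≤ K → ∑' i, ‖⟪b i, x⟫_ℂ‖ ^ 2 ≤ K ^ 2 := fun x hx =>
    (b.orthonormal.tsum_inner_products_le (x := x)).trans (pow_le_pow_left₀ (norm_nonneg x) hx 2)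
  have hg : Summable g := by
    refine (summable_prod_of_nonneg fun _ => by positivity).2
      ⟨fun n => (hrow n).summable, (h.summable.mul_right (K ^ 2 + K ^ 2)).of_nonneg_of_le
        (fun _ => tsum_nonneg fun _ => by positivity) fun n => ?_⟩
    rw [(hrow n).tsum_eq]
    exact mul_le_mul_of_nonneg_left
      (add_le_add (bessel _ (h.norm_v_le n)) (bessel _ (h.norm_u_le n))) (norm_nonneg _)
  refine Summable.of_norm_bounded hg fun ⟨n, i⟩ => ?_
  dsimp only [g]
  rw [norm_mul, norm_mul, norm_inner_symm (v n)]
  gcongr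
  nlinarith [sq_nonneg (‖⟪b i, v n⟫_ℂ‖ - ‖⟪b i, u n⟫_ℂ‖), norm_nonneg ⟪b i, v n⟫_ℂ,
    norm_nonneg ⟪b i, u n⟫_ℂ]

theorem tsum_inner_hilbertBasis [CompleteSpace E] {ι : Type*} (b : HilbertBasis ι ℂ E)
    (h : IsNuclearDecomposition A K c u v) :
    ∑' i, ⟪b i, A (b i)⟫_ℂ = ∑' n, c n * ⟪v n, u n⟫_ℂ := by
  calc ∑' i, ⟪b i, A (b i)⟫_ℂ = ∑' i, ∑' n, c n * (⟪v n, b i⟫_ℂ * ⟪b i, u n⟫_ℂ) := by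
        refine tsum_congr fun i => ?_
        refine ((h.hasSum_apply (b i)).mapL (innerSL ℂ (b i))).tsum_eq.symm.trans
          (tsum_congr fun n => ?_)
        simp only [innerSL_apply_apply, inner_smul_right]
    _ = ∑' n, ∑' i, c n * (⟪v n, b i⟫_ℂ * ⟪b i, u n⟫_ℂ) :=
        Summable.tsum_comm (f := fun n i => c n * (⟪v n, b i⟫_ℂ * ⟪b i, u n⟫_ℂ))
          (h.summable_coeff_mul_inner_mul_inner b)
    _ = ∑' n, c n * ⟪v n, u n⟫_ℂ :=
        tsum_congr fun n => by rw [tsum_mul_left, b.tsum_inner_mul_inner]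

theorem trace_eq [CompleteSpace E] (h : IsNuclearDecomposition A K c u v) :
    trace A = ∑' n, c n * ⟪v n, u n⟫_ℂ := by
  obtain ⟨_, b, -⟩ := exists_hilbertBasis ℂ E
  have hA := h.isTraceClass
  obtain ⟨hc, hu, hv, hApply⟩ := hA.choose_spec.choose_spec.choose_spec
  rw [trace, dif_pos hA, ← (⟨hc, hu, hv, hApply⟩ : IsNuclearDecomposition A 1 _ _ _)
    |>.tsum_inner_hilbertBasis b, h.tsum_inner_hilbertBasis b]

end

end IsNuclearDecomposition

namespace IsTraceClass

variable {A B : E →L[ℂ] F}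

theorem add [CompleteSpace F] (hA : IsTraceClass A) (hB : IsTraceClass B) :
    IsTraceClass (A + B) := by
  obtain ⟨c, u, v, hA⟩ := isTraceClass_iff_exists_isNuclearDecomposition.1 hA
  obtain ⟨d, w, z, hB⟩ := isTraceClass_iff_exists_isNuclearDecomposition.1 hB
  exact (hA.add hB).isTraceClass

theorem neg (hA : IsTraceClass A) : IsTraceClass (-A) := by
  obtain ⟨c, u, v, hA⟩ := isTraceClass_iff_exists_isNuclearDecomposition.1 hA
  exact hA.neg.isTraceClass

theorem sub [CompleteSpace F] (hA : IsTraceClass A) (hB : IsTraceClass B) :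
    IsTraceClass (A - B) :=
  sub_eq_add_neg A B ▸ hA.add hB.neg

theorem clm_comp [CompleteSpace F] (hA : IsTraceClass A) (Y : F →L[ℂ] G) :
    IsTraceClass (Y ∘L A) := by
  obtain ⟨c, u, v, hA⟩ := isTraceClass_iff_exists_isNuclearDecomposition.1 hA
  exact (hA.clm_comp Y).isTraceClass

theorem comp_clm [CompleteSpace E] [CompleteSpace G] (hA : IsTraceClass A) (Y : G →L[ℂ] E) :
    IsTraceClass (A ∘L Y) := by
  obtain ⟨c, u, v, hA⟩ := isTraceClass_iff_exists_isNuclearDecomposition.1 hA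
  exact (hA.comp_clm Y).isTraceClass

end IsTraceClass

section Trace

variable [CompleteSpace E] {A B : E →L[ℂ] E}

theorem trace_add (hA : IsTraceClass A) (hB : IsTraceClass B) :
    trace (A + B) = trace A + trace B := by
  obtain ⟨c, u, v, hA⟩ := isTraceClass_iff_exists_isNuclearDecomposition.1 hA
  obtain ⟨d, w, z, hB⟩ := isTraceClass_iff_exists_isNuclearDecomposition.1 hB
  rw [(hA.add hB).trace_eq, hA.trace_eq, hB.trace_eq]
  exact (HasSum.even_add_odd (by simpa using hA.summable_coeff_mul_inner.hasSum)
    (by simpa using hB.summable_coeff_mul_inner.hasSum)).tsum_eq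

theorem trace_neg (hA : IsTraceClass A) : trace (-A) = -trace A := by
  obtain ⟨c, u, v, hA⟩ := isTraceClass_iff_exists_isNuclearDecomposition.1 hA
  rw [hA.neg.trace_eq, hA.trace_eq, ← tsum_neg]
  simp only [Pi.neg_apply, neg_mul]

theorem trace_sub (hA : IsTraceClass A) (hB : IsTraceClass B) :
    trace (A - B) = trace A - trace B := by
  rw [sub_eq_add_neg, trace_add hA hB.neg, trace_neg hB, ← sub_eq_add_neg]

theorem trace_comp_comm [CompleteSpace F] {X : E →L[ℂ] F} (hX : IsTraceClass X)
    (Y : F →L[ℂ] E) : trace (Y ∘L X) = trace (X ∘L Y) := by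
  obtain ⟨c, u, v, hX⟩ := isTraceClass_iff_exists_isNuclearDecomposition.1 hX
  rw [(hX.clm_comp Y).trace_eq, (hX.comp_clm Y).trace_eq]
  simp only [adjoint_inner_left]

theorem trace_comp_sub_comp_eq_zero (hA : IsTraceClass A) (Y : E →L[ℂ] E) :
    trace (A ∘L Y - Y ∘L A) = 0 := by
  rw [trace_sub (hA.comp_clm Y) (hA.clm_comp Y), trace_comp_comm hA Y, sub_self]

end Trace

section Conjugation

variable {T U : E →L[ℂ] F} {T' U' : F →L[ℂ] E}

theorem conj_sub_conj_eq (R : F →L[ℂ] F) :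
    T' ∘L R ∘L T - U' ∘L R ∘L U = (T' ∘L R) ∘L (T - U) + (T' - U') ∘L (R ∘L U) := by
  ext x
  simp only [sub_apply, add_apply, comp_apply, map_sub]
  abel

variable [CompleteSpace E] [CompleteSpace F]

theorem isTraceClass_conj_sub_conj (R : F →L[ℂ] F) (hT : IsTraceClass (T - U))
    (hT' : IsTraceClass (T' - U')) : IsTraceClass (T' ∘L R ∘L T - U' ∘L R ∘L U) := by
  rw [conj_sub_conj_eq]
  exact (hT.clm_comp _).add (hT'.comp_clm _)

theorem trace_conj_sub_conj_eq_zero (R : F →L[ℂ] F) (hTT' : T ∘L T' = .id ℂ F)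
    (hUU' : U ∘L U' = .id ℂ F) (hT : IsTraceClass (T - U)) (hT' : IsTraceClass (T' - U')) :
    trace (T' ∘L R ∘L T - U' ∘L R ∘L U) = 0 := by
  -- since `T T' = U U' = 1`, the two cyclically permuted terms add up to a commutator
  have hcomm : (T - U) ∘L (T' ∘L R) + (R ∘L U) ∘L (T' - U') =
      ((T - U) ∘L T') ∘L R - R ∘L ((T - U) ∘L T') := by
    ext x
    have hTT'x := DFunLike.congr_fun hTT'
    have hUU'x := DFunLike.congr_fun hUU'
    simp only [comp_apply] at hTT'x hUU'x
    simp only [add_apply, sub_apply, comp_apply, map_sub, hTT'x, hUU'x]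
    abel
  calc trace (T' ∘L R ∘L T - U' ∘L R ∘L U)
      = trace ((T' ∘L R) ∘L (T - U)) + trace ((T' - U') ∘L (R ∘L U)) := by
        rw [conj_sub_conj_eq, trace_add (hT.clm_comp _) (hT'.comp_clm _)]
    _ = trace ((T - U) ∘L (T' ∘L R)) + trace ((R ∘L U) ∘L (T' - U')) := by
        rw [trace_comp_comm hT, trace_comp_comm hT']
    _ = trace ((T - U) ∘L (T' ∘L R) + (R ∘L U) ∘L (T' - U')) :=
        (trace_add (hT.comp_clm _) (hT'.clm_comp _)).symm
    _ = 0 := by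
        rw [hcomm]
        exact trace_comp_sub_comp_eq_zero (hT.comp_clm T') R

end Conjugation

end Pap

theorem trace_curvature_difference_cocycle_general
    {H : Type*} [NormedAddCommGroup H] [InnerProductSpace ℂ H] [CompleteSpace H]
    (P₀ P₁ P₂ : H →L[ℂ] H)
    (h₀2 : P₀.comp P₀ = P₀)
    (h₂2 : P₂.comp P₂ = P₂)
    (T₁' : (LinearMap.range (P₁ : H →ₗ[ℂ] H)) →L[ℂ] (LinearMap.range (P₀ : H →ₗ[ℂ] H)))
    (hT₁'r : (Pap.toeplitz P₀ P₁).comp T₁' = ContinuousLinearMap.id ℂ _)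
    (T₂' : (LinearMap.range (P₂ : H →ₗ[ℂ] H)) →L[ℂ] (LinearMap.range (P₁ : H →ₗ[ℂ] H)))
    (hT₂'r : (Pap.toeplitz P₁ P₂).comp T₂' = ContinuousLinearMap.id ℂ _)
    (T' : (LinearMap.range (P₂ : H →ₗ[ℂ] H)) →L[ℂ] (LinearMap.range (P₀ : H →ₗ[ℂ] H)))
    (hT'r : (Pap.toeplitz P₀ P₂).comp T' = ContinuousLinearMap.id ℂ _)
    (R₀ : (LinearMap.range (P₀ : H →ₗ[ℂ] H)) →L[ℂ] (LinearMap.range (P₀ : H →ₗ[ℂ] H)))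
    (R₂ : (LinearMap.range (P₂ : H →ₗ[ℂ] H)) →L[ℂ] (LinearMap.range (P₂ : H →ₗ[ℂ] H)))
    (hpert : Pap.IsTraceClass
      (Pap.toeplitz P₀ P₂ - (Pap.toeplitz P₁ P₂).comp (Pap.toeplitz P₀ P₁)))
    (hpertInv : Pap.IsTraceClass (T' - T₁'.comp T₂'))
    (htc₂ : Pap.IsTraceClass ((T₁'.comp T₂').comp
      (R₂.comp ((Pap.toeplitz P₁ P₂).comp (Pap.toeplitz P₀ P₁))) - R₀)) :
    Pap.trace (T'.comp (R₂.comp (Pap.toeplitz P₀ P₂)) - R₀) =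
      Pap.trace ((T₁'.comp T₂').comp
        (R₂.comp ((Pap.toeplitz P₁ P₂).comp (Pap.toeplitz P₀ P₁))) - R₀) := by
  have := (ContinuousLinearMap.IsIdempotentElem.isClosed_range h₀2).completeSpace_coe
  have := (ContinuousLinearMap.IsIdempotentElem.isClosed_range h₂2).completeSpace_coe
  have hS : ((Pap.toeplitz P₁ P₂).comp (Pap.toeplitz P₀ P₁)).comp (T₁'.comp T₂') =
      ContinuousLinearMap.id ℂ _ := by
    rw [ContinuousLinearMap.comp_assoc, ← (Pap.toeplitz P₀ P₁).comp_assoc, hT₁'r,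
      ContinuousLinearMap.id_comp, hT₂'r]
  have h := Pap.trace_add (Pap.isTraceClass_conj_sub_conj R₂ hpert hpertInv) htc₂
  rwa [sub_add_sub_cancel, Pap.trace_conj_sub_conj_eq_zero R₂ hT'r hS hpert hpertInv,
    zero_add] at h

/-- Cocycle property of curvature-difference traces. For orthogonal projections
`P⁰, P¹, P²` pairwise differing by trace class, invertible Toeplitz operators
`T₁ = (P⁰,P¹)`, `T₂ = (P¹,P²)`, `T = (P⁰,P²)` (inverses `T₁', T₂', T'`), and bounded
`R⁰ ∈ End(W⁰)`, `R² ∈ End(W²)` with the relevant differences trace class, one has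
`tr_{W⁰}[T⁻¹R²T − R⁰] = tr_{W⁰}[(T₂T₁)⁻¹R²(T₂T₁) − R⁰]`, provided `T − T₂T₁` and
`T⁻¹ − (T₂T₁)⁻¹` are trace class. -/
theorem trace_curvature_difference_cocycle
    {H : Type*} [NormedAddCommGroup H] [InnerProductSpace ℂ H] [CompleteSpace H]
    [TopologicalSpace.SeparableSpace H]
    (P₀ P₁ P₂ : H →L[ℂ] H)
    (h₀2 : P₀.comp P₀ = P₀) (h₀sa : ∀ x y : H, (inner ℂ (P₀ x) y : ℂ) = inner ℂ x (P₀ y))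
    (h₁2 : P₁.comp P₁ = P₁) (h₁sa : ∀ x y : H, (inner ℂ (P₁ x) y : ℂ) = inner ℂ x (P₁ y))
    (h₂2 : P₂.comp P₂ = P₂) (h₂sa : ∀ x y : H, (inner ℂ (P₂ x) y : ℂ) = inner ℂ x (P₂ y))
    (h01 : Pap.IsTraceClass (P₀ - P₁)) (h12 : Pap.IsTraceClass (P₁ - P₂))
    (h02 : Pap.IsTraceClass (P₀ - P₂))
    (T₁' : (LinearMap.range (P₁ : H →ₗ[ℂ] H)) →L[ℂ] (LinearMap.range (P₀ : H →ₗ[ℂ] H)))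
    (hT₁'l : T₁'.comp (Pap.toeplitz P₀ P₁) = ContinuousLinearMap.id ℂ _)
    (hT₁'r : (Pap.toeplitz P₀ P₁).comp T₁' = ContinuousLinearMap.id ℂ _)
    (T₂' : (LinearMap.range (P₂ : H →ₗ[ℂ] H)) →L[ℂ] (LinearMap.range (P₁ : H →ₗ[ℂ] H)))
    (hT₂'l : T₂'.comp (Pap.toeplitz P₁ P₂) = ContinuousLinearMap.id ℂ _)
    (hT₂'r : (Pap.toeplitz P₁ P₂).comp T₂' = ContinuousLinearMap.id ℂ _)
    (T' : (LinearMap.range (P₂ : H →ₗ[ℂ] H)) →L[ℂ] (LinearMap.range (P₀ : H →ₗ[ℂ] H)))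
    (hT'l : T'.comp (Pap.toeplitz P₀ P₂) = ContinuousLinearMap.id ℂ _)
    (hT'r : (Pap.toeplitz P₀ P₂).comp T' = ContinuousLinearMap.id ℂ _)
    (R₀ : (LinearMap.range (P₀ : H →ₗ[ℂ] H)) →L[ℂ] (LinearMap.range (P₀ : H →ₗ[ℂ] H)))
    (R₂ : (LinearMap.range (P₂ : H →ₗ[ℂ] H)) →L[ℂ] (LinearMap.range (P₂ : H →ₗ[ℂ] H)))
    (hpert : Pap.IsTraceClass
      (Pap.toeplitz P₀ P₂ - (Pap.toeplitz P₁ P₂).comp (Pap.toeplitz P₀ P₁)))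
    (hpertInv : Pap.IsTraceClass (T' - T₁'.comp T₂'))
    (htc₁ : Pap.IsTraceClass (T'.comp (R₂.comp (Pap.toeplitz P₀ P₂)) - R₀))
    (htc₂ : Pap.IsTraceClass ((T₁'.comp T₂').comp
      (R₂.comp ((Pap.toeplitz P₁ P₂).comp (Pap.toeplitz P₀ P₁))) - R₀)) :
    Pap.trace (T'.comp (R₂.comp (Pap.toeplitz P₀ P₂)) - R₀) =
      Pap.trace ((T₁'.comp T₂').comp
        (R₂.comp ((Pap.toeplitz P₁ P₂).comp (Pap.toeplitz P₀ P₁))) - R₀) :=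
  trace_curvature_difference_cocycle_general P₀ P₁ P₂ h₀2 h₂2 T₁' hT₁'r T₂' hT₂'r T' hT'r R₀ R₂
    hpert hpertInv htc₂
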